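/- Fix an integer r ≥ 4. There exists n_0 = n_0(r) such that if G is a K_{r+1}-free graph on n ≥ n_0 vertices with ν(P_3, G) = ex(n, P_3, K_{r+1}), then every vertex v of G satisfies ν_G(v, P_3) ≥ (12·((r−1)/r)^3 − 1/r^{10})·C(n−1, 3) − n^3/r^4, where ν_G(v, P_3) denotes the number of P_3 subgraphs of G containing v. -/

import Mathlib

open SimpleGraph

/-- The number of (not necessarily induced) subgraphs of `G` isomorphic to `T`. -/
noncomputable def subgraphCount {α β : Type*} (T : SimpleGraph α) (G : SimpleGraph β) : ℕ :=
  Nat.card {H : G.Subgraph // Nonempty (T ≃g H.coe)}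

/-- `G` is `F`-free: it contains no subgraph isomorphic to `F`. -/
def IsFFree {α β : Type*} (F : SimpleGraph α) (G : SimpleGraph β) : Prop :=
  ∀ H : G.Subgraph, IsEmpty (F ≃g H.coe)

/-- The generalized Turán number `ex(n, T, F)`. -/
noncomputable def genTuran (n : ℕ) {α γ : Type*} (T : SimpleGraph α) (F : SimpleGraph γ) : ℕ :=
  sSup {k | ∃ G : SimpleGraph (Fin n), IsFFree F G ∧ subgraphCount T G = k}

/-- The path with three edges on four vertices. -/
noncomputable def P3 : SimpleGraph (Fin 4) := pathGraph 4

/-- The number of (not necessarily induced) subgraphs of `G` isomorphic to `T`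
that contain the vertex `v`. -/
noncomputable def vertexSubgraphCount {α β : Type*} (T : SimpleGraph α) (G : SimpleGraph β)
    (v : β) : ℕ :=
  Nat.card {H : G.Subgraph // Nonempty (T ≃g H.coe) ∧ v ∈ H.verts}

/-!
Zykov symmetrization: in a `K_{r+1}`-free graph `G` maximising the number of copies of `P₃`,
replacing a vertex `v` by a non-adjacent twin of a vertex `u` keeps the graph `K_{r+1}`-free
and changes the number of labelled copies by at least `L_u - L_v - O(n²)`, where `L_x` counts
labelled copies through `x`. Taking for `u` a vertex with at least the average number
`4 L / n` of labelled copies through it gives `L_v ≥ 4 L / n - O(n²)` for every `v`.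
By extremality `L` is at least the count in the Turán graph, whose minimum degree
`n - ⌈n / r⌉` already yields `n (n - n / r - 3)³` labelled paths. Labelled copies are
`|Aut P₃| = 2` times unlabelled ones, and the bound follows from `12 C(n - 1, 3) ≤ 2 n³`
once `n ≥ 27 r⁴`.
-/

open Finset Function

lemma Nat.card_eq_card_subtype_add_card_subtype_not {β : Type*} [Finite β] (q : β → Prop) :
    Nat.card β = Nat.card {x // q x} + Nat.card {x // ¬q x} := by
  classical
  rw [← Nat.card_sum]
  exact Nat.card_congr (Equiv.sumCompl q).symm

lemma Nat.card_subtype_eq_card_and_add_card_and_not {β : Type*} [Finite β] (p q : β → Prop) :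
    Nat.card {x // p x} = Nat.card {x // p x ∧ q x} + Nat.card {x // p x ∧ ¬q x} := by
  rw [Nat.card_eq_card_subtype_add_card_subtype_not (q ·.1),
    Nat.card_congr (Equiv.subtypeSubtypeEquivSubtypeInter p q),
    Nat.card_congr (Equiv.subtypeSubtypeEquivSubtypeInter p (¬q ·))]

lemma Finset.mul_le_sum_of_le_card {ι : Type*} {s : Finset ι} {f : ι → ℕ} {m k : ℕ}
    (hm : m ≤ #s) (hk : ∀ i ∈ s, k ≤ f i) : m * k ≤ ∑ i ∈ s, f i :=
  (Nat.mul_le_mul_right k hm).trans (by simpa using s.card_nsmul_le_sum f k hk)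

namespace SimpleGraph

variable {V α β : Type*} {H : SimpleGraph V} {G : SimpleGraph α}

instance [Finite V] [Finite α] : Finite (Copy H G) :=
  Finite.of_injective _ DFunLike.coe_injective

lemma Subgraph.toSubgraph_coeCopy_comp {G' : G.Subgraph} (e : H ≃g G'.coe) :
    (G'.coeCopy.comp e.toCopy).toSubgraph = G' := by
  have : (G'.coeCopy.comp e.toCopy).toHom = G'.hom.comp e.toHom := rfl
  rw [Copy.toSubgraph, this, Subgraph.map_comp]
  simp

lemma Copy.range_eq_toSubgraph_verts (f : Copy H G) : Set.range f = f.toSubgraph.verts := by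
  simp [Copy.toSubgraph]

/-- Fixing an isomorphism `e_{G'} : H ≃g G'` for each subgraph `G'` isomorphic to `H`, every copy
of `H` is uniquely `e_{G'} ∘ σ` for its image `G'` and an automorphism `σ` of `H`. -/
theorem natCard_copy_eq_natCard_aut_mul (P : Set α → Prop) :
    Nat.card {f : Copy H G // P (Set.range f)} =
      Nat.card (H ≃g H) * Nat.card {G' : G.Subgraph // Nonempty (H ≃g G'.coe) ∧ P G'.verts} := by
  rw [← Nat.card_prod]
  symm
  refine Nat.card_eq_of_bijective
    (fun p ↦ ⟨p.2.1.coeCopy.comp (p.2.2.1.some.comp p.1).toCopy, ?_⟩) ⟨?_, ?_⟩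
  · rw [Copy.range_eq_toSubgraph_verts, Subgraph.toSubgraph_coeCopy_comp]
    exact p.2.2.2
  · rintro ⟨σ, G₁, hG₁⟩ ⟨τ, G₂, hG₂⟩ h
    have hf := congrArg Subtype.val h
    obtain rfl : G₁ = G₂ := by
      simpa only [Subgraph.toSubgraph_coeCopy_comp] using congrArg Copy.toSubgraph hf
    obtain rfl : σ = τ := by
      ext a
      exact hG₁.1.some.injective (Subtype.ext (DFunLike.congr_fun hf a))
    rfl
  · rintro ⟨f, hf⟩
    let e := f.isoToSubgraph
    have he : Nonempty (H ≃g f.toSubgraph.coe) ∧ P f.toSubgraph.verts :=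
      ⟨⟨e⟩, f.range_eq_toSubgraph_verts ▸ hf⟩
    refine ⟨(he.1.some.symm.comp e, ⟨f.toSubgraph, he⟩), Subtype.ext (Copy.ext fun a ↦ ?_)⟩
    exact congrArg Subtype.val (he.1.some.apply_symm_apply (e a))

theorem sum_natCard_copy_mem_range [Fintype V] [Fintype α] :
    ∑ v : α, Nat.card {f : Copy H G // v ∈ Set.range f} =
      Fintype.card V * Nat.card (Copy H G) := by
  rw [← Nat.card_sigma, ← Nat.card_eq_fintype_card, ← Nat.card_prod]
  refine Nat.card_congr
    { toFun := fun p ↦ (p.2.2.choose, p.2.1)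
      invFun := fun p ↦ ⟨p.2 p.1, p.2, p.1, rfl⟩
      left_inv := fun p ↦ Sigma.subtype_ext p.2.2.choose_spec rfl
      right_inv := fun p ↦ Prod.ext (p.2.injective (Set.mem_range_self p.1).choose_spec) rfl }

theorem exists_card_mul_natCard_copy_le [Fintype V] [Fintype α] [Nonempty α] :
    ∃ u : α, Fintype.card V * Nat.card (Copy H G) ≤
      Fintype.card α * Nat.card {f : Copy H G // u ∈ Set.range f} := by
  obtain ⟨u, -, hu⟩ := exists_le_of_sum_le univ_nonempty (s := univ)
    (f := fun _ ↦ Fintype.card V * Nat.card (Copy H G))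
    (g := fun u ↦ Fintype.card α * Nat.card {f : Copy H G // u ∈ Set.range f})
    (by rw [sum_const, card_univ, ← mul_sum, sum_natCard_copy_mem_range, smul_eq_mul, mul_comm])
  exact ⟨u, hu⟩

theorem natCard_copy_congr_of_iso {G' : SimpleGraph β} (τ : G ≃g G') {P : Set α → Prop}
    {Q : Set β → Prop} (hPQ : ∀ S, P S ↔ Q (τ '' S)) :
    Nat.card {f : Copy H G // P (Set.range f)} = Nat.card {f : Copy H G' // Q (Set.range f)} := by
  refine Nat.card_congr
    { toFun := fun f ↦ ⟨τ.toCopy.comp f, ?_⟩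
      invFun := fun f ↦ ⟨τ.symm.toCopy.comp f, ?_⟩
      left_inv := fun f ↦ Subtype.ext (Copy.ext fun a ↦ τ.symm_apply_apply (f.1 a))
      right_inv := fun f ↦ Subtype.ext (Copy.ext fun a ↦ τ.apply_symm_apply (f.1 a)) }
  · rw [Copy.coe_comp, Set.range_comp]
    exact (hPQ _).1 f.2
  · rw [Copy.coe_comp, Set.range_comp, hPQ, ← Set.image_comp]
    simpa using f.2

theorem natCard_copy_le_of_adj_of_ne [Finite V] [Finite α] {G' : SimpleGraph α} {t : α}
    (hGG' : ∀ x y, x ≠ t → y ≠ t → G.Adj x y → G'.Adj x y) {P : Set α → Prop}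
    (hP : ∀ S, P S → t ∉ S) :
    Nat.card {f : Copy H G // P (Set.range f)} ≤ Nat.card {f : Copy H G' // P (Set.range f)} := by
  refine Nat.card_le_card_of_injective (fun f ↦ ⟨⟨⟨f.1, fun {a b} hab ↦ ?_⟩, f.1.injective⟩, f.2⟩)
    fun f g hfg ↦ Subtype.ext (Copy.ext fun a ↦ DFunLike.congr_fun (congrArg Subtype.val hfg) a)
  have hf (c : V) : f.1 c ≠ t := fun h ↦ hP _ f.2 ⟨c, h⟩
  exact hGG' _ _ (hf a) (hf b) (f.1.toHom.map_adj hab)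

section ReplaceVertex

variable [DecidableEq α]

def replaceVertexSwap (G : SimpleGraph α) (s t : α) :
    G.replaceVertex s t ≃g G.replaceVertex s t where
  toEquiv := Equiv.swap s t
  map_rel_iff' {x y} := by
    simp only [replaceVertex, Equiv.swap_apply_def]
    split_ifs <;> subst_vars <;> simp_all [adj_comm]

/-- Copies avoiding `t` survive the replacement, and copies through `s` avoiding `t` reappear,
after swapping the twins `s` and `t`, as copies through `t` avoiding `s`. -/
theorem natCard_copy_add_le_replaceVertex [Finite V] [Finite α] (s t : α) :
    Nat.card (Copy H G) + Nat.card {f : Copy H G // s ∈ Set.range f} ≤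
      Nat.card (Copy H (G.replaceVertex s t)) + Nat.card {f : Copy H G // t ∈ Set.range f} +
        Nat.card {f : Copy H G // s ∈ Set.range f ∧ t ∈ Set.range f} := by
  set G' := G.replaceVertex s t
  have hG' (x y : α) (hx : x ≠ t) (hy : y ≠ t) : G.Adj x y → G'.Adj x y :=
    (G.adj_replaceVertex_iff_of_ne s hx hy).2
  have h_avoid := natCard_copy_le_of_adj_of_ne (H := H) (P := (t ∉ ·)) hG' fun _ h ↦ h
  have h_through := natCard_copy_le_of_adj_of_ne (H := H) (P := fun S ↦ s ∈ S ∧ t ∉ S) hG'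
    fun _ h ↦ h.2
  have h_swap : Nat.card {f : Copy H G' // s ∈ Set.range f ∧ t ∉ Set.range f} =
      Nat.card {f : Copy H G' // t ∈ Set.range f ∧ s ∉ Set.range f} :=
    natCard_copy_congr_of_iso (G.replaceVertexSwap s t) (P := fun S ↦ s ∈ S ∧ t ∉ S)
      (Q := fun S ↦ t ∈ S ∧ s ∉ S) fun S ↦ by
      have hinj := (Equiv.swap s t).injective
      rw [← hinj.mem_set_image, ← hinj.mem_set_image (a := t), Equiv.swap_apply_left,
        Equiv.swap_apply_right]
      rfl
  have := Nat.card_eq_card_subtype_add_card_subtype_not (fun f : Copy H G ↦ t ∈ Set.range f)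
  have := Nat.card_eq_card_subtype_add_card_subtype_not (fun f : Copy H G' ↦ t ∈ Set.range f)
  have := Nat.card_subtype_eq_card_and_add_card_and_not (fun f : Copy H G ↦ s ∈ Set.range f)
    (fun f ↦ t ∈ Set.range f)
  have := Nat.card_subtype_eq_card_and_add_card_and_not (fun f : Copy H G' ↦ t ∈ Set.range f)
    (fun f ↦ s ∈ Set.range f)
  omega

end ReplaceVertex

section FourVertices

variable {H : SimpleGraph (Fin 4)}

/-- For `i ≠ j`, the two elements of `Fin 4` other than `i` and `j`. -/
def fin4Complement (i j : Fin 4) : Fin 4 × Fin 4 :=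
  (if 0 ≠ i ∧ 0 ≠ j then 0 else if 1 ≠ i ∧ 1 ≠ j then 1 else 2,
    if 3 ≠ i ∧ 3 ≠ j then 3 else if 2 ≠ i ∧ 2 ≠ j then 2 else 1)

lemma eq_or_eq_or_mem_fin4Complement :
    ∀ i j : Fin 4, i ≠ j → ∀ k, k = i ∨ k = j ∨ k = (fin4Complement i j).1 ∨
      k = (fin4Complement i j).2 := by
  decide

theorem natCard_copy_mem_range_mem_range_le [Fintype α] {u v : α} (huv : u ≠ v) :
    Nat.card {f : Copy H G // u ∈ Set.range f ∧ v ∈ Set.range f} ≤ 16 * Fintype.card α ^ 2 := by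
  let pos (f : {f : Copy H G // u ∈ Set.range f ∧ v ∈ Set.range f}) : Fin 4 × Fin 4 :=
    (f.2.1.choose, f.2.2.choose)
  calc _ ≤ Nat.card (Fin 4 × Fin 4 × α × α) := by
        refine Nat.card_le_card_of_injective
          (fun f ↦ ((pos f).1, (pos f).2, f.1 (fin4Complement (pos f).1 (pos f).2).1,
            f.1 (fin4Complement (pos f).1 (pos f).2).2)) ?_
        rintro ⟨f, hu, hv⟩ ⟨g, hu', hv'⟩ h
        simp only [Prod.mk.injEq, pos] at h
        obtain ⟨hi, hj, h₁, h₂⟩ := h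
        have hij : hu.choose ≠ hv.choose := fun h ↦ huv (hu.choose_spec ▸ h ▸ hv.choose_spec)
        refine Subtype.ext (Copy.ext fun k ↦ ?_)
        rcases eq_or_eq_or_mem_fin4Complement _ _ hij k with rfl | rfl | rfl | rfl
        · rw [hu.choose_spec, hi, hu'.choose_spec]
        · rw [hv.choose_spec, hj, hv'.choose_spec]
        · rw [h₁, hi, hj]
        · rw [h₂, hi, hj]
    _ = 16 * Fintype.card α ^ 2 := by simp; ring

theorem four_mul_natCard_copy_le [Fintype α] [DecidableEq α]
    (hsym : ∀ s t, Nat.card (Copy H (G.replaceVertex s t)) ≤ Nat.card (Copy H G)) (v : α) :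
    4 * Nat.card (Copy H G) ≤
      Fintype.card α * Nat.card {f : Copy H G // v ∈ Set.range f} + 16 * Fintype.card α ^ 3 := by
  have : Nonempty α := ⟨v⟩
  obtain ⟨u, hu⟩ := exists_card_mul_natCard_copy_le (H := H) (G := G)
  rw [Fintype.card_fin] at hu
  suffices Nat.card {f : Copy H G // u ∈ Set.range f} ≤
      Nat.card {f : Copy H G // v ∈ Set.range f} + 16 * Fintype.card α ^ 2 by
    calc _ ≤ _ := hu
      _ ≤ _ := Nat.mul_le_mul_left _ this
      _ = _ := by ring
  rcases eq_or_ne u v with rfl | huv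
  · exact Nat.le_add_right _ _
  have := natCard_copy_add_le_replaceVertex (H := H) (G := G) u v
  have := hsym u v
  have := natCard_copy_mem_range_mem_range_le (G := G) (H := H) huv
  omega

end FourVertices

set_option maxRecDepth 20000 in
lemma eq_id_or_eq_rev_of_P3_adj_iff (σ : Fin 4 → Fin 4)
    (h : ∀ i j, P3.Adj (σ i) (σ j) ↔ P3.Adj i j) : σ = id ∨ σ = ![3, 2, 1, 0] := by
  simp only [P3, pathGraph_adj] at h
  revert σ
  decide

lemma natCard_aut_P3_le : Nat.card (P3 ≃g P3) ≤ 2 := by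
  classical
  let S : Finset (Fin 4 → Fin 4) := {id, ![3, 2, 1, 0]}
  have key (σ : P3 ≃g P3) : ⇑σ ∈ S := by
    simpa [S] using eq_id_or_eq_rev_of_P3_adj_iff σ fun i j ↦ σ.map_adj_iff
  calc Nat.card (P3 ≃g P3) ≤ Nat.card S :=
        Nat.card_le_card_of_injective (fun σ ↦ ⟨σ, key σ⟩)
          fun σ τ h ↦ DFunLike.coe_injective (congrArg Subtype.val h)
    _ ≤ 2 := by rw [Nat.card_eq_finsetCard]; exact card_le_two

def pathCopy {a b c d : α} (hab : G.Adj a b) (hbc : G.Adj b c) (hcd : G.Adj c d) (hac : a ≠ c)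
    (had : a ≠ d) (hbd : b ≠ d) : Copy P3 G where
  toHom.toFun := ![a, b, c, d]
  toHom.map_rel' {i j} h := by
    simp only [P3, pathGraph_adj] at h
    fin_cases i <;> fin_cases j <;> simp_all [adj_comm]
  injective' i j h := by
    have := hab.ne; have := hbc.ne; have := hcd.ne
    fin_cases i <;> fin_cases j <;> simp_all [eq_comm]

/-- Greedily: `n` choices of `a`, then at least `δ`, `δ - 1`, `δ - 2` choices of `b`, `c`, `d`. -/
theorem card_mul_pow_le_natCard_copy_P3 [Fintype α] [DecidableEq α] [DecidableRel G.Adj] {δ : ℕ}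
    (hδ : ∀ a, δ ≤ G.degree a) : Fintype.card α * (δ - 2) ^ 3 ≤ Nat.card (Copy P3 G) := by
  let paths : Finset (Σ _ : α, Σ _ : α, Σ _ : α, α) :=
    univ.sigma fun a ↦ (G.neighborFinset a).sigma fun b ↦ ((G.neighborFinset b).erase a).sigma
      fun c ↦ G.neighborFinset c \ {a, b}
  have hcard : Fintype.card α * (δ - 2) ^ 3 ≤ #paths := by
    simp only [paths, card_sigma]
    refine mul_le_sum_of_le_card (by simp) fun a _ ↦ ?_
    rw [pow_succ']
    refine mul_le_sum_of_le_card ((Nat.sub_le _ _).trans (hδ a)) fun b _ ↦ ?_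
    rw [sq]
    refine mul_le_sum_of_le_card ?_ fun c _ ↦ ?_
    · have := pred_card_le_card_erase (s := G.neighborFinset b) (a := a)
      rw [card_neighborFinset_eq_degree] at this
      have := hδ b
      omega
    · have := le_card_sdiff {a, b} (G.neighborFinset c)
      have := card_le_two (a := a) (b := b)
      rw [card_neighborFinset_eq_degree] at *
      have := hδ c
      omega
  have hmem : ∀ p ∈ paths, G.Adj p.1 p.2.1 ∧ G.Adj p.2.1 p.2.2.1 ∧ G.Adj p.2.2.1 p.2.2.2 ∧
      p.1 ≠ p.2.2.1 ∧ p.1 ≠ p.2.2.2 ∧ p.2.1 ≠ p.2.2.2 := by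
    rintro ⟨a, b, c, d⟩ hp
    simp only [paths, mem_sigma, mem_neighborFinset, mem_erase, mem_sdiff, mem_insert,
      mem_singleton, not_or] at hp
    exact ⟨hp.2.1, hp.2.2.1.2, hp.2.2.2.1, Ne.symm hp.2.2.1.1, Ne.symm hp.2.2.2.2.1,
      Ne.symm hp.2.2.2.2.2⟩
  let path (p : paths) : Copy P3 G :=
    pathCopy (hmem _ p.2).1 (hmem _ p.2).2.1 (hmem _ p.2).2.2.1 (hmem _ p.2).2.2.2.1
      (hmem _ p.2).2.2.2.2.1 (hmem _ p.2).2.2.2.2.2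
  calc _ ≤ #paths := hcard
    _ = Nat.card paths := (Nat.card_eq_finsetCard paths).symm
    _ ≤ Nat.card (Copy P3 G) := Nat.card_le_card_of_injective path fun p q h ↦
        Subtype.ext (congrArg (fun f : Copy P3 G ↦
          (⟨f 0, f 1, f 2, f 3⟩ : Σ _ : α, Σ _ : α, Σ _ : α, α)) h)

lemma card_filter_mod_eq_le (n r c : ℕ) : #{w : Fin n | (w : ℕ) % r = c} ≤ n / r + 1 := by
  calc #{w : Fin n | (w : ℕ) % r = c}
      ≤ #(range (n / r + 1)) := card_le_card_of_injOn (fun w ↦ (w : ℕ) / r)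
        (fun w _ ↦ by simpa [Nat.lt_succ_iff] using Nat.div_le_div_right w.2.le)
        fun w₁ h₁ w₂ h₂ h ↦ by
          simp only [coe_filter, mem_univ, true_and, Set.mem_ofPred_eq] at h₁ h₂ h
          exact Fin.ext (by rw [← Nat.div_add_mod w₁ r, ← Nat.div_add_mod w₂ r, h, h₁, h₂])
    _ = n / r + 1 := card_range _

theorem sub_div_sub_one_le_degree_turanGraph (n r : ℕ) (v : Fin n) :
    n - n / r - 1 ≤ (turanGraph n r).degree v := by
  have hsplit := card_filter_add_card_filter_not (s := univ)
    (fun w : Fin n ↦ (w : ℕ) % r = v % r)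
  have hdeg : (turanGraph n r).degree v = #{w : Fin n | ¬(w : ℕ) % r = v % r} := by
    rw [← card_neighborFinset_eq_degree]
    congr 1
    ext w
    simp [turanGraph_adj, eq_comm]
  have := card_filter_mod_eq_le n r (v % r)
  simp only [card_univ, Fintype.card_fin] at hsplit
  omega

end SimpleGraph

theorem isFFree_iff_free {α β : Type*} {F : SimpleGraph α} {G : SimpleGraph β} :
    IsFFree F G ↔ F.Free G := by
  simp [IsFFree, Free, isContained_iff_exists_iso_subgraph, not_nonempty_iff]

theorem isFFree_top_iff_cliqueFree {β : Type*} {G : SimpleGraph β} {k : ℕ} :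
    IsFFree (⊤ : SimpleGraph (Fin k)) G ↔ G.CliqueFree k := by
  rw [isFFree_iff_free, ← cliqueFree_iff_top_free, Fintype.card_fin]

theorem subgraphCount_le_genTuran {α γ : Type*} {n : ℕ} {T : SimpleGraph α} {F : SimpleGraph γ}
    {G : SimpleGraph (Fin n)} (hG : IsFFree F G) : subgraphCount T G ≤ genTuran n T F :=
  le_csSup ((Set.finite_range (subgraphCount T)).subset
    (by rintro _ ⟨G, -, rfl⟩; exact ⟨G, rfl⟩)).bddAbove ⟨G, hG, rfl⟩

theorem natCard_copy_eq_mul_subgraphCount {V α : Type*} (H : SimpleGraph V) (G : SimpleGraph α) :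
    Nat.card (Copy H G) = Nat.card (H ≃g H) * subgraphCount H G := by
  rw [subgraphCount, ← Nat.card_congr (Equiv.subtypeUnivEquiv (p := fun _ ↦ True) fun _ ↦ trivial),
    natCard_copy_eq_natCard_aut_mul (fun _ ↦ True)]
  simp only [and_true]

theorem natCard_copy_mem_range_eq_mul_vertexSubgraphCount {V α : Type*} (H : SimpleGraph V)
    (G : SimpleGraph α) (v : α) :
    Nat.card {f : Copy H G // v ∈ Set.range f} = Nat.card (H ≃g H) * vertexSubgraphCount H G v :=
  natCard_copy_eq_natCard_aut_mul (v ∈ ·)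

lemma bound_le_of_two_mul_cube_sub_le {r n m ν C : ℝ} (hr : 4 ≤ r) (hn : 27 * r ^ 4 ≤ n)
    (hm : n - n / r - 3 ≤ m) (hC : 0 ≤ C) (hCn : 6 * C ≤ n ^ 3)
    (hν : 2 * m ^ 3 - 8 * n ^ 2 ≤ ν) :
    (12 * ((r - 1) / r) ^ 3 - 1 / r ^ 10) * C - n ^ 3 / r ^ 4 ≤ ν := by
  have hr0 : 0 < r := by linarith
  set q := (r - 1) / r with hq
  have hqm : q * n - 3 ≤ m := by
    have : q * n = n - n / r := by rw [hq]; field_simp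
    linarith
  have hq0 : 0 ≤ q := div_nonneg (by linarith) hr0.le
  have hq1 : q ≤ 1 := by rw [hq, div_le_one hr0]; linarith
  have hr4 : 256 ≤ r ^ 4 := by nlinarith [pow_le_pow_left₀ (by norm_num) hr 4]
  have hqn : 3 ≤ q * n := by
    have : 3 / 4 ≤ q := by rw [hq, le_div_iff₀ hr0]; linarith
    nlinarith
  have hcube : (q * n - 3) ^ 3 ≤ m ^ 3 := pow_le_pow_left₀ (by linarith) hqm 3
  have hslack : 27 * n ^ 2 ≤ n ^ 3 / r ^ 4 := by
    rw [le_div_iff₀ (by positivity)]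
    nlinarith [sq_nonneg n]
  have hexpand : 2 * q ^ 3 * n ^ 3 - 18 * n ^ 2 ≤ 2 * (q * n - 3) ^ 3 := by
    nlinarith [mul_le_mul_of_nonneg_right (pow_le_one₀ hq0 hq1 : q ^ 2 ≤ 1) (sq_nonneg n)]
  have hCq : 12 * q ^ 3 * C ≤ 2 * q ^ 3 * n ^ 3 := by nlinarith [pow_nonneg hq0 3]
  have h10 : 0 ≤ 1 / r ^ 10 * C := by positivity
  nlinarith

lemma bound_le_of_four_mul_cube_le {r n ν : ℕ} (hr : 4 ≤ r) (hn : 27 * r ^ 4 ≤ n)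
    (hν : 4 * (n - n / r - 1 - 2) ^ 3 ≤ 2 * ν + 16 * n ^ 2) :
    (12 * (((r : ℝ) - 1) / r) ^ 3 - 1 / (r : ℝ) ^ 10) * (n - 1).choose 3 - (n : ℝ) ^ 3 / r ^ 4 ≤
      ν := by
  set m := n - n / r - 1 - 2
  have hm : (n : ℝ) - n / r - 3 ≤ m := by
    have h₁ : (n : ℝ) ≤ m + ((n / r : ℕ) : ℝ) + 3 := by exact_mod_cast (by omega : n ≤ m + n / r + 3)
    linarith [(Nat.cast_div_le : ((n / r : ℕ) : ℝ) ≤ n / r)]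
  have hC : 6 * ((n - 1).choose 3 : ℝ) ≤ n ^ 3 := by
    have h₁ := Nat.choose_le_pow_div (α := ℝ) 3 (n - 1)
    have h₂ : ((n - 1 : ℕ) : ℝ) ^ 3 ≤ (n : ℝ) ^ 3 :=
      pow_le_pow_left₀ (by positivity) (by exact_mod_cast Nat.sub_le n 1) 3
    norm_num [Nat.factorial] at h₁
    linarith
  have hνℝ : (4 * m ^ 3 : ℝ) ≤ 2 * ν + 16 * n ^ 2 := by exact_mod_cast hν
  exact bound_le_of_two_mul_cube_sub_le (by exact_mod_cast hr) (by exact_mod_cast hn) hm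
    (by positivity) hC (by linarith)

theorem extremal_min_vertex_P3_count (r : ℕ) (hr : 4 ≤ r) :
    ∃ n₀ : ℕ, ∀ n : ℕ, n₀ ≤ n →
      ∀ G : SimpleGraph (Fin n), IsFFree (⊤ : SimpleGraph (Fin (r + 1))) G →
        subgraphCount P3 G = genTuran n P3 (⊤ : SimpleGraph (Fin (r + 1))) →
        ∀ v : Fin n,
          (12 * (((r : ℝ) - 1) / r) ^ 3 - 1 / (r : ℝ) ^ 10) * (n - 1).choose 3 -
              (n : ℝ) ^ 3 / r ^ 4 ≤
            (vertexSubgraphCount P3 G v : ℝ) := by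
  refine ⟨27 * r ^ 4, fun n hn G hG hext v ↦ bound_le_of_four_mul_cube_le hr hn ?_⟩
  have hmax (G' : SimpleGraph (Fin n)) (hG' : G'.CliqueFree (r + 1)) :
      Nat.card (Copy P3 G') ≤ Nat.card (Copy P3 G) := by
    rw [natCard_copy_eq_mul_subgraphCount, natCard_copy_eq_mul_subgraphCount, hext]
    exact Nat.mul_le_mul_left _ (subgraphCount_le_genTuran (isFFree_top_iff_cliqueFree.2 hG'))
  have hturan := (card_mul_pow_le_natCard_copy_P3 (sub_div_sub_one_le_degree_turanGraph n r)).trans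
    (hmax _ (turanGraph_cliqueFree (by omega)))
  have hsym := four_mul_natCard_copy_le
    (fun s t ↦ hmax _ ((isFFree_top_iff_cliqueFree.1 hG).replaceVertex s t)) v
  have hv : Nat.card {f : Copy P3 G // v ∈ Set.range f} ≤ 2 * vertexSubgraphCount P3 G v := by
    rw [natCard_copy_mem_range_eq_mul_vertexSubgraphCount]
    exact Nat.mul_le_mul_right _ natCard_aut_P3_le
  rw [Fintype.card_fin] at hturan hsym
  exact Nat.le_of_mul_le_mul_left (by nlinarith) (lt_of_lt_of_le (by positivity) hn)
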